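/- Let v₁, v₂, v₃ ∈ ℂ³ be orthonormal with respect to the real inner product Re⟨·,·⟩. Then Re Φ(v₁,v₂,v₃) ≤ 1, and equality holds if and only if the complex 3×3 matrix M with columns v₁, v₂, v₃ lies in SU(3) (M is unitary and det M = 1). In particular, if Re Φ(v₁,v₂,v₃) = 1 then ω(v_j, v_k) = 0 for all j, k, so the real span of v₁, v₂, v₃ is a Lagrangian subspace; that is, Re Φ is a calibration on ℂ³ whose calibrated 3-planes are special Lagrangian. -/

import Mathlib

/-- The complex volume form `Φ = dz₁ ∧ dz₂ ∧ dz₃` on `ℂ³`, evaluated on the triple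
of vectors `v 0, v 1, v 2`: the determinant of the complex matrix with columns
`v 0, v 1, v 2`. -/
noncomputable def PhiForm (v : Fin 3 → EuclideanSpace ℂ (Fin 3)) : ℂ :=
  (Matrix.of fun i j : Fin 3 => v j i).det

/-- The fundamental (Kähler) 2-form `ω(x, y) = Im ⟨x, y⟩` on `ℂ³`. -/
noncomputable def omegaForm (x y : EuclideanSpace ℂ (Fin 3)) : ℝ :=
  (inner ℂ x y : ℂ).im

/-!
If `M` has real-orthonormal columns, its Gram matrix `Mᴴ M` has real part `1`, so it equals
`1 + i Ω` with `Ω = (ω(v_j, v_k))` real and skew-symmetric. In dimension three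
`det (1 + i Ω) = 1 - ‖Ω‖² / 2`, hence `|det M|² = 1 - ‖Ω‖² / 2 ≤ 1` and `Re det M ≤ 1`.
Equality forces `det M = 1` and `Ω = 0`, i.e. `Mᴴ M = 1`.
-/

open Matrix Complex

lemma omegaForm_swap (x y : EuclideanSpace ℂ (Fin 3)) : omegaForm y x = -omegaForm x y := by
  rw [omegaForm, omegaForm, ← inner_conj_symm, conj_im]

lemma gram_eq_one_add_I_smul_omegaForm {ι : Type*} [DecidableEq ι]
    (v : ι → EuclideanSpace ℂ (Fin 3))
    (hv : ∀ j k : ι, (inner ℂ (v j) (v k) : ℂ).re = if j = k then 1 else 0) :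
    gram ℂ v = 1 + I • (of fun j k => omegaForm (v j) (v k)).map ofReal := by
  ext j k
  rw [gram_apply, ← re_add_im (inner ℂ (v j) (v k)), hv]
  by_cases hjk : j = k <;> simp [hjk, one_apply, omegaForm, mul_comm]

lemma det_one_add_I_smul_of_skew (Ω : Matrix (Fin 3) (Fin 3) ℝ) (hΩ : ∀ j k, Ω k j = -Ω j k) :
    (1 + I • Ω.map ofReal).det = ((1 - (∑ j, ∑ k, Ω j k ^ 2) / 2 : ℝ) : ℂ) := by
  have hdiag : ∀ j, Ω j j = 0 := fun j => by linarith [hΩ j j]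
  simp [det_fin_three, Fin.sum_univ_three, hdiag, hΩ 0 1, hΩ 0 2, hΩ 1 2]
  linear_combination (↑(Ω 0 1) ^ 2 + ↑(Ω 0 2) ^ 2 + ↑(Ω 1 2) ^ 2 : ℂ) * I_sq

lemma normSq_det_eq_det_conjTranspose_mul {n : Type*} [Fintype n] [DecidableEq n]
    (M : Matrix n n ℂ) : (normSq M.det : ℂ) = (Mᴴ * M).det := by
  rw [det_mul, det_conjTranspose, normSq_eq_conj_mul_self]
  rfl

lemma Matrix.eq_zero_of_sum_sum_sq_eq_zero {m n : Type*} [Fintype m] [Fintype n]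
    (A : Matrix m n ℝ) (h : ∑ i, ∑ j, A i j ^ 2 = 0) : A = 0 := by
  ext i j
  have hrow := (Fintype.sum_eq_zero_iff_of_nonneg fun i => by positivity).1 h
  exact pow_eq_zero_iff two_ne_zero |>.1 <|
    congrFun ((Fintype.sum_eq_zero_iff_of_nonneg fun j => by positivity).1 (congrFun hrow i)) j

lemma Complex.re_le_one_of_normSq_le_one {z : ℂ} (h : normSq z ≤ 1) : z.re ≤ 1 := by
  nlinarith [re_sq_le_normSq z]

lemma Complex.eq_one_of_re_eq_one_of_normSq_le_one {z : ℂ} (hre : z.re = 1)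
    (h : normSq z ≤ 1) : z = 1 := by
  rw [normSq_apply, hre] at h
  exact Complex.ext hre (by simpa using (by nlinarith [sq_nonneg z.im] : z.im * z.im = 0))

/-- if `v₁, v₂, v₃ ∈ ℂ³` are orthonormal for the real inner product,
then `Re Φ(v₁,v₂,v₃) ≤ 1`, with equality iff the matrix `M` with columns
`v₁, v₂, v₃` lies in `SU(3)`; in particular, if `Re Φ(v₁,v₂,v₃) = 1` then
`ω(v_j, v_k) = 0` for all `j, k`, so the real span of `v₁, v₂, v₃` is Lagrangian:
`Re Φ` is a calibration whose calibrated 3-planes are special Lagrangian. -/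
theorem re_Phi_le_one_of_real_orthonormal
    (v : Fin 3 → EuclideanSpace ℂ (Fin 3))
    (hv : ∀ j k : Fin 3, (inner ℂ (v j) (v k) : ℂ).re = if j = k then 1 else 0) :
    (PhiForm v).re ≤ 1 ∧
    ((PhiForm v).re = 1 ↔
      ((Matrix.of fun i j : Fin 3 => v j i) ∈ Matrix.unitaryGroup (Fin 3) ℂ ∧
        (Matrix.of fun i j : Fin 3 => v j i).det = 1)) ∧
    ((PhiForm v).re = 1 → ∀ j k : Fin 3, omegaForm (v j) (v k) = 0) := by
  set M : Matrix (Fin 3) (Fin 3) ℂ := of fun i j => v j i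
  set Ω : Matrix (Fin 3) (Fin 3) ℝ := of fun j k => omegaForm (v j) (v k)
  have hgram : Mᴴ * M = 1 + I • Ω.map ofReal :=
    (gram_eq_conjTranspose_mul (EuclideanSpace.basisFun (Fin 3) ℂ) v).symm.trans
      (gram_eq_one_add_I_smul_omegaForm v hv)
  have hnormSq : normSq M.det = 1 - (∑ j, ∑ k, Ω j k ^ 2) / 2 := by
    rw [← ofReal_inj, normSq_det_eq_det_conjTranspose_mul, hgram,
      det_one_add_I_smul_of_skew Ω fun j k => omegaForm_swap (v j) (v k)]
  have hsum : 0 ≤ ∑ j, ∑ k, Ω j k ^ 2 := by positivity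
  have hcal : M.det.re = 1 → M.det = 1 ∧ Ω = 0 := fun hre =>
    ⟨eq_one_of_re_eq_one_of_normSq_le_one hre (by linarith),
      Ω.eq_zero_of_sum_sum_sq_eq_zero (by nlinarith [re_sq_le_normSq M.det])⟩
  rw [show PhiForm v = M.det from rfl]
  refine ⟨re_le_one_of_normSq_le_one (by linarith), ⟨fun hre => ?_, fun h => by simp [h.2]⟩,
    fun hre j k => congrFun (congrFun (hcal hre).2 j) k⟩
  obtain ⟨hdet, hΩ⟩ := hcal hre
  exact ⟨mem_unitaryGroup_iff'.2 (by simp [star_eq_conjTranspose, hgram, hΩ]), hdet⟩
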